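/- If P is a finite interval order, then fldim(P) < 4. -/

import Mathlib

noncomputable section

/-- A partial linear extension (ple) of a poset, encoded as a list of distinct elements:
the list order is the linear order, and it must extend the poset order on its members. -/
def IsPLE (α : Type*) [PartialOrder α] [DecidableEq α] (l : List α) : Prop :=
  l.Nodup ∧ ∀ x ∈ l, ∀ y ∈ l, x < y → l.idxOf x < l.idxOf y

/-- `u ≤ v` in the ple `l`. -/
def pleLE {α : Type*} [DecidableEq α] (l : List α) (u v : α) : Prop :=
  u ∈ l ∧ v ∈ l ∧ l.idxOf u ≤ l.idxOf v

/-- `u < v` in the ple `l`. -/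
def pleLT {α : Type*} [DecidableEq α] (l : List α) (u v : α) : Prop :=
  u ∈ l ∧ v ∈ l ∧ l.idxOf u < l.idxOf v

/-- A local weight function: assigns to each ple of the poset a weight in [0,1]. -/
structure LocalWeight (α : Type*) [PartialOrder α] [DecidableEq α] where
  w : List α → ℝ
  nonneg : ∀ l, 0 ≤ w l
  le_one : ∀ l, w l ≤ 1
  supp : ∀ l, ¬ IsPLE α l → w l = 0

/-- local measure μ(u,w): total weight of ple's containing `u`. -/
def localMeasure {α : Type*} [PartialOrder α] [DecidableEq α] (W : LocalWeight α) (u : α) : ℝ :=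
  ∑ᶠ l ∈ {l : List α | IsPLE α l ∧ u ∈ l}, W.w l

/-- μ(P,w): the maximum local measure over elements of the poset. -/
def maxLocalMeasure {α : Type*} [PartialOrder α] [DecidableEq α] [Fintype α]
    (W : LocalWeight α) : ℝ :=
  ⨆ u : α, localMeasure W u

/-- A fractional local realizer. -/
def IsFLRealizer {α : Type*} [PartialOrder α] [DecidableEq α] (W : LocalWeight α) : Prop :=
  (∀ u v : α, u ≤ v →
    1 ≤ ∑ᶠ l ∈ {l : List α | IsPLE α l ∧ pleLE l u v}, W.w l) ∧
  (∀ u v : α, ¬ u ≤ v → ¬ v ≤ u →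
    1 ≤ ∑ᶠ l ∈ {l : List α | IsPLE α l ∧ pleLT l v u}, W.w l)

/-- The fractional local dimension of a finite poset. -/
def fldim (α : Type*) [PartialOrder α] [DecidableEq α] [Fintype α] : ℝ :=
  sInf {c : ℝ | ∃ W : LocalWeight α, IsFLRealizer W ∧ maxLocalMeasure W = c}

/-- The poset P(1,d;n): all 1-element and d-element subsets of {1,…,n}, ordered by inclusion. -/
abbrev PosetOneDN (d n : ℕ) := {S : Finset (Fin n) // S.card = 1 ∨ S.card = d}

/-- fldim(1,d;n). -/
def fldim1dn (d n : ℕ) : ℝ := fldim (PosetOneDN d n)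

end

/-!
An interval order has a representation `x ↦ [l x, r x]` by integer intervals with pairwise
distinct endpoints, `x < y` iff `r x < l y`: its strict down-sets form a chain. Toss an
independent coin for each element and list the elements by the endpoint the coin selects, the
right one on heads and the left one on tails; every such list is a linear extension. For
incomparable `x, y` the outcome "`x` heads, `y` tails" already puts `y` before `x`, which with fair
coins reverses the pair with probability `1/4`. Biasing coin `z` towards tails by
`ε (l z + r z)` for a small `ε > 0` raises this to `(1 + ε)/4`: either an endpoint of `y` precedes
the same endpoint of `x` and a single coin suffices, or the midpoint of `x` lies left of that of `y`
and the bias favours exactly the outcome "`x` heads, `y` tails". Scaling the weights by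
`4/(1 + ε)` gives a fractional realizer by linear extensions of total weight `4/(1 + ε) < 4`,
and the fractional local dimension is at most the fractional dimension.
-/

open Finset Function

section Realizer

open scoped Classical

variable {α ι : Type*} [PartialOrder α] [DecidableEq α] [Fintype ι]

lemma localMeasure_nonneg (W : LocalWeight α) (u : α) : 0 ≤ localMeasure W u :=
  finsum_nonneg fun l => finsum_nonneg fun _ => W.nonneg l

lemma fldim_le_maxLocalMeasure [Fintype α] {W : LocalWeight α} (hW : IsFLRealizer W) :
    fldim α ≤ maxLocalMeasure W :=
  csInf_le ⟨0, by rintro c ⟨W, -, rfl⟩; exact Real.iSup_nonneg (localMeasure_nonneg W)⟩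
    ⟨W, hW, rfl⟩

def LocalWeight.ofLinearExtensions (L : ι → List α) (hL : ∀ i, IsPLE α (L i)) (p : ι → ℝ)
    (hp : ∀ i, 0 ≤ p i) : LocalWeight α where
  w m := min 1 (∑ i with L i = m, p i)
  nonneg _ := le_min zero_le_one (sum_nonneg fun i _ => hp i)
  le_one _ := min_le_left _ _
  supp m hm := by
    rw [filter_false_of_mem fun i _ (him : L i = m) => hm (him ▸ hL i), sum_empty,
      min_eq_right zero_le_one]

namespace LocalWeight.ofLinearExtensions

variable {L : ι → List α} {hL : ∀ i, IsPLE α (L i)} {p : ι → ℝ} {hp : ∀ i, 0 ≤ p i}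

lemma finsum_eq (S : Set (List α)) :
    ∑ᶠ m ∈ S, (ofLinearExtensions L hL p hp).w m
      = ∑ m ∈ (univ.image L).filter (· ∈ S), min 1 (∑ i with L i = m, p i) := by
  refine finsum_mem_eq_sum_of_inter_support_eq _ (Set.ext fun m => ?_)
  simp only [Set.mem_inter_iff, mem_support, coe_filter, mem_image, mem_univ, true_and]
  refine ⟨fun ⟨hm, hw⟩ => ⟨⟨?_, hm⟩, hw⟩, fun ⟨⟨_, hm⟩, hw⟩ => ⟨hm, hw⟩⟩
  by_contra! hne
  exact hw (by simp [ofLinearExtensions, filter_false_of_mem fun i _ => hne i])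

lemma finsum_le (S : Set (List α)) :
    ∑ᶠ m ∈ S, (ofLinearExtensions L hL p hp).w m ≤ ∑ i, p i := by
  rw [finsum_eq]
  calc _ ≤ ∑ m ∈ (univ.image L).filter (· ∈ S), ∑ i with L i = m, p i :=
        sum_le_sum fun m _ => min_le_right _ _
    _ ≤ ∑ m ∈ univ.image L, ∑ i with L i = m, p i :=
        sum_le_sum_of_subset_of_nonneg (filter_subset _ _) fun m _ _ =>
          sum_nonneg fun i _ => hp i
    _ = ∑ i, p i := by rw [sum_fiberwise_eq_sum_filter]; simp

lemma one_le_finsum (S : Set (List α)) (h : 1 ≤ ∑ i with L i ∈ S, p i) :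
    1 ≤ ∑ᶠ m ∈ S, (ofLinearExtensions L hL p hp).w m := by
  rw [finsum_eq]
  calc (1 : ℝ) = min 1 (∑ m ∈ (univ.image L).filter (· ∈ S), ∑ i with L i = m, p i) := by
        rw [sum_fiberwise_eq_sum_filter, min_eq_left]
        simpa using h
    -- capping at `1` loses nothing, as `min 1` is subadditive on `[0, ∞)`
    _ ≤ _ := le_sum_of_subadditive_on_pred (min 1) (0 ≤ ·) (by simp)
        (fun a b ha hb => by simp only [min_def]; split_ifs <;> linarith)
        (fun _ _ => add_nonneg) _ fun m _ => sum_nonneg fun i _ => hp i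

end LocalWeight.ofLinearExtensions

/-- `fldim` is at most the fractional dimension. -/
theorem fldim_le_of_linearExtensions [Fintype α] (L : ι → List α) (hL : ∀ i, IsPLE α (L i))
    (hmem : ∀ i x, x ∈ L i) (p : ι → ℝ) (hp : ∀ i, 0 ≤ p i) (hsum : 1 ≤ ∑ i, p i)
    (hrev : ∀ u v, ¬ u ≤ v → ¬ v ≤ u → 1 ≤ ∑ i with pleLT (L i) v u, p i) :
    fldim α ≤ ∑ i, p i := by
  set W := LocalWeight.ofLinearExtensions L hL p hp
  have hreal : IsFLRealizer W := by
    refine ⟨fun u v huv => ?_, fun u v h₁ h₂ => ?_⟩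
    · refine LocalWeight.ofLinearExtensions.one_le_finsum _ (hsum.trans_eq ?_)
      have hle (i : ι) : pleLE (L i) u v := by
        refine ⟨hmem i u, hmem i v, ?_⟩
        rcases huv.lt_or_eq with h | rfl
        · exact ((hL i).2 u (hmem i u) v (hmem i v) h).le
        · exact le_rfl
      simp [hL, hle]
    · refine LocalWeight.ofLinearExtensions.one_le_finsum _ ((hrev u v h₁ h₂).trans_eq ?_)
      simp only [Set.mem_ofPred_eq, hL, true_and]
  exact (fldim_le_maxLocalMeasure hreal).trans <| Real.iSup_le
    (fun u => LocalWeight.ofLinearExtensions.finsum_le _) (sum_nonneg fun i _ => hp i)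

end Realizer

theorem List.Pairwise.idxOf_lt_idxOf_iff {β : Type*} [DecidableEq β] {R : β → β → Prop}
    {L : List β} (hL : L.Pairwise R) (hR : ∀ a b, R a b → ¬ R b a) {x y : β} (hx : x ∈ L)
    (hy : y ∈ L) : L.idxOf x < L.idxOf y ↔ R x y := by
  have rel {a b : β} (ha : a ∈ L) (hb : b ∈ L) (hab : L.idxOf a < L.idxOf b) : R a b := by
    simpa only [List.getElem_idxOf] using List.pairwise_iff_getElem.1 hL _ _
      (List.idxOf_lt_length_iff.2 ha) (List.idxOf_lt_length_iff.2 hb) hab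
  refine ⟨rel hx hy, fun h => ?_⟩
  rcases lt_trichotomy (L.idxOf x) (L.idxOf y) with hlt | heq | hgt
  · exact hlt
  · rw [(List.idxOf_inj hx).1 heq] at h
    exact absurd h (hR y y h)
  · exact absurd (rel hy hx hgt) (hR x y h)

section SortedBy

variable {α : Type*} [Fintype α] {f : α → ℕ}

noncomputable def sortedBy (f : α → ℕ) : List α :=
  univ.toList.mergeSort fun a b => decide (f a ≤ f b)

lemma mem_sortedBy (f : α → ℕ) (x : α) : x ∈ sortedBy f := by
  simp [sortedBy, (List.mergeSort_perm _ _).mem_iff]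

lemma nodup_sortedBy (f : α → ℕ) : (sortedBy f).Nodup :=
  (List.mergeSort_perm _ _).nodup_iff.2 (nodup_toList _)

variable [DecidableEq α]

lemma idxOf_sortedBy_lt_iff (hf : Injective f) {x y : α} :
    (sortedBy f).idxOf x < (sortedBy f).idxOf y ↔ f x < f y := by
  have hsorted : (sortedBy f).Pairwise fun a b => f a ≤ f b := by
    simpa [sortedBy] using List.pairwise_mergeSort (le := fun a b => f a ≤ f b)
      (fun _ _ _ => by simpa using le_trans) (fun a b => by simpa using le_total (f a) (f b)) _
  refine (hsorted.and (nodup_sortedBy f)).imp (fun h => h.1.lt_of_ne (hf.ne h.2))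
    |>.idxOf_lt_idxOf_iff (fun _ _ h => not_lt_of_gt h) (mem_sortedBy f x) (mem_sortedBy f y)

lemma pleLT_sortedBy_iff (hf : Injective f) {x y : α} :
    pleLT (sortedBy f) x y ↔ f x < f y := by
  simp [pleLT, mem_sortedBy, idxOf_sortedBy_lt_iff hf]

lemma isPLE_sortedBy [PartialOrder α] (hf : Injective f) (hmono : StrictMono f) :
    IsPLE α (sortedBy f) :=
  ⟨nodup_sortedBy f, fun _ _ _ _ hxy => (idxOf_sortedBy_lt_iff hf).2 (hmono hxy)⟩

end SortedBy

section IntervalRepr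

variable {α : Type*}

def IsIntervalOrder (α : Type*) [PartialOrder α] : Prop :=
  ¬ ∃ a₁ a₂ b₁ b₂ : α,
      a₁ < b₂ ∧ a₂ < b₁ ∧
      ¬ a₁ ≤ b₁ ∧ ¬ b₁ ≤ a₁ ∧
      ¬ a₂ ≤ b₂ ∧ ¬ b₂ ≤ a₂ ∧
      ¬ a₁ ≤ a₂ ∧ ¬ a₂ ≤ a₁ ∧
      ¬ b₁ ≤ b₂ ∧ ¬ b₂ ≤ b₁

structure IsIntervalRepr [Preorder α] (l r : α → ℕ) : Prop where
  left_le_right : ∀ x, l x ≤ r x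
  lt_iff : ∀ x y, x < y ↔ r x < l y

/-- The strict down-sets of an interval order form a chain. -/
lemma IsIntervalOrder.lt_of_lt_of_not_lt [PartialOrder α] (h : IsIntervalOrder α) {w x y z : α}
    (hxy : x < y) (hxz : ¬ x < z) (hwz : w < z) : w < y := by
  by_contra hwy
  refine h ⟨w, x, y, z, hwz, hxy, ?_, ?_, ?_, ?_, ?_, ?_, ?_, ?_⟩ <;> intro <;> order

theorem IsIntervalOrder.exists_isIntervalRepr [PartialOrder α] [Fintype α]
    (h : IsIntervalOrder α) : ∃ l r : α → ℕ, IsIntervalRepr l r := by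
  classical
  set l : α → ℕ := fun y => #{u | u < y}
  refine ⟨l, fun x => ({z | ¬ x < z} : Finset α).sup l, fun x => le_sup (by simp), fun x y => ?_⟩
  refine ⟨fun hxy => (Finset.sup_lt_iff (card_pos.2 ⟨x, by simpa⟩)).2 fun z hz => ?_,
    fun hlt => by_contra fun hxy => hlt.not_ge (le_sup (f := l) (by simpa))⟩
  simp only [mem_filter, mem_univ, true_and] at hz
  refine card_lt_card ⟨fun w hw => ?_, fun hsub => hz (by simpa using hsub (by simpa using hxy))⟩
  simpa using h.lt_of_lt_of_not_lt hxy hz (by simpa using hw)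

lemma Nat.mul_add_lt_mul_add_iff {k a a' c c' : ℕ} (hc : c < k) (hc' : c' < k) :
    a * k + c < a' * k + c' ↔ a < a' ∨ a = a' ∧ c < c' := by
  rcases lt_trichotomy a a' with h | rfl | h
  · have : (a + 1) * k ≤ a' * k := Nat.mul_le_mul_right k h
    simp only [h, true_or, iff_true]; linarith
  · simp
  · have : (a' + 1) * k ≤ a * k := Nat.mul_le_mul_right k h
    simp only [h.not_gt, h.ne', false_and, or_self, iff_false, not_lt]; linarith

/-- Scale by `2 |α|` and break ties with an enumeration `e : α → Fin |α|`: the new left and right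
endpoints of `x` are `2 |α| l x + e x` and `2 |α| r x + |α| + e x`. -/
theorem IsIntervalRepr.exists_injective [Preorder α] [Fintype α] {l r : α → ℕ}
    (h : IsIntervalRepr l r) :
    ∃ l' r' : α → ℕ, IsIntervalRepr l' r' ∧ Injective (Sum.elim l' r') := by
  set n := Fintype.card α
  set e : α → ℕ := fun x => Fintype.equivFin α x
  have he : Injective e := fun x y hxy => (Fintype.equivFin α).injective (Fin.ext hxy)
  have hen (x : α) : e x < n := (Fintype.equivFin α x).isLt
  set c : α ⊕ α → ℕ := Sum.elim e (n + e ·)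
  have hc : Injective c := by
    rintro (x | x) (y | y) hxy <;> simp only [c, Sum.elim_inl, Sum.elim_inr] at hxy
    · exact congrArg _ (he hxy)
    · linarith [hen x]
    · linarith [hen y]
    · exact congrArg _ (he (by omega))
  have hc2 (s : α ⊕ α) : c s < 2 * n := by
    rcases s with x | x <;> simp only [c, Sum.elim_inl, Sum.elim_inr] <;> linarith [hen x]
  set E : α ⊕ α → ℕ := fun s => Sum.elim l r s * (2 * n) + c s
  refine ⟨E ∘ Sum.inl, E ∘ Sum.inr, ⟨fun x => ?_, fun x y => ?_⟩, ?_⟩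
  · have := Nat.mul_le_mul_right (2 * n) (h.left_le_right x)
    simp only [E, c, comp_apply, Sum.elim_inl, Sum.elim_inr]
    omega
  · have := hen y
    simp only [E, comp_apply, h.lt_iff, Nat.mul_add_lt_mul_add_iff (hc2 _) (hc2 _)]
    simp only [c, Sum.elim_inl, Sum.elim_inr]
    omega
  · rw [Sum.elim_comp_inl_inr]
    intro s s' hss
    exact hc (by simpa [E, Nat.mul_add_mod_of_lt (hc2 _)] using congrArg (· % (2 * n)) hss)

end IntervalRepr

section ProductWeight

variable {α : Type*} [Fintype α] {f : α → Bool → ℝ}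

/-- The law of independent coins, coin `z` showing `b` with probability `f z b`. -/
def productWeight (f : α → Bool → ℝ) (q : α → Bool) : ℝ := ∏ z, f z (q z)

lemma productWeight_nonneg (hf : ∀ z b, 0 ≤ f z b) (q : α → Bool) : 0 ≤ productWeight f q :=
  prod_nonneg fun z _ => hf z (q z)

variable [DecidableEq α]

lemma sum_productWeight_cylinder (hf : ∀ z, f z true + f z false = 1) (T : Finset α)
    (c : α → Bool) :
    ∑ q with ∀ z ∈ T, q z = c z, productWeight f q = ∏ z ∈ T, f z (c z) := by
  have hcyl : ({q | ∀ z ∈ T, q z = c z} : Finset (α → Bool))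
      = Fintype.piFinset fun z => if z ∈ T then {c z} else univ := by
    ext q
    simp only [mem_filter, mem_univ, true_and, Fintype.mem_piFinset]
    exact forall_congr' fun z => by split_ifs <;> simp [*]
  have hfiber (z : α) : ∑ b ∈ (if z ∈ T then {c z} else univ), f z b
      = if z ∈ T then f z (c z) else 1 := by
    split_ifs <;> simp [hf]
  simp only [productWeight, hcyl, ← prod_univ_sum, hfiber, prod_ite_mem, univ_inter]

lemma sum_productWeight (hf : ∀ z, f z true + f z false = 1) : ∑ q, productWeight f q = 1 := by
  simpa using sum_productWeight_cylinder hf ∅ fun _ => true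

lemma prod_le_sum_productWeight (hf : ∀ z b, 0 ≤ f z b) (hf1 : ∀ z, f z true + f z false = 1)
    {P : (α → Bool) → Prop} [DecidablePred P] (T : Finset α) (c : α → Bool)
    (hP : ∀ q, (∀ z ∈ T, q z = c z) → P q) :
    ∏ z ∈ T, f z (c z) ≤ ∑ q with P q, productWeight f q := by
  rw [← sum_productWeight_cylinder hf1]
  exact sum_le_sum_of_subset_of_nonneg (monotone_filter_right _ fun q _ => hP q)
    fun q _ _ => productWeight_nonneg hf q

end ProductWeight

section BiasedCoin

variable {α : Type*} {ε : ℝ}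

noncomputable def biasedCoin (ε : ℝ) (s : α → ℕ) (z : α) (b : Bool) : ℝ :=
  if b then 1 / 2 - ε * s z else 1 / 2 + ε * s z

lemma biasedCoin_true_add_false (ε : ℝ) (s : α → ℕ) (z : α) :
    biasedCoin ε s z true + biasedCoin ε s z false = 1 := by
  simp only [biasedCoin, Bool.false_eq_true, ↓reduceIte]; ring

lemma mul_add_le_of_mul_add_one_sq_le {t : ℝ} (hε0 : 0 ≤ ε) (ht : 0 ≤ t)
    (h : ε * (t + 1) ^ 2 ≤ 1 / 4) : ε * t + ε ≤ 1 / 4 := by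
  nlinarith [mul_nonneg hε0 (sq_nonneg t), mul_nonneg hε0 ht]

lemma biasedCoin_nonneg {s : α → ℕ} (hε0 : 0 ≤ ε) (hε : ∀ z, ε * ((s z : ℝ) + 1) ^ 2 ≤ 1 / 4)
    (z : α) (b : Bool) : 0 ≤ biasedCoin ε s z b := by
  have := mul_add_le_of_mul_add_one_sq_le hε0 (Nat.cast_nonneg _) (hε z)
  cases b <;> simp only [biasedCoin, Bool.false_eq_true, ↓reduceIte] <;>
    linarith [mul_nonneg hε0 (Nat.cast_nonneg (α := ℝ) (s z))]

lemma one_add_div_four_le_mul {a b : ℝ} (hε0 : 0 ≤ ε) (ha : 0 ≤ a) (hab : a + 1 ≤ b)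
    (hb : ε * (b + 1) ^ 2 ≤ 1 / 4) : (1 + ε) / 4 ≤ (1 / 2 - ε * a) * (1 / 2 + ε * b) := by
  have hprod : ε * (a * b) ≤ 1 / 4 := by nlinarith [mul_nonneg hε0 ha]
  nlinarith [mul_le_mul_of_nonneg_left hprod hε0, mul_le_mul_of_nonneg_left hab hε0]

end BiasedCoin

section Endpoint

variable {α : Type*} {l r : α → ℕ}

def endpoint (l r : α → ℕ) (q : α → Bool) (z : α) : ℕ := if q z then r z else l z

lemma endpoint_injective (hinj : Injective (Sum.elim l r)) (q : α → Bool) :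
    Injective (endpoint l r q) := by
  intro x y h
  unfold endpoint at h
  split_ifs at h
  · exact Sum.inr_injective (hinj (a₁ := .inr x) (a₂ := .inr y) h)
  · exact absurd (hinj (a₁ := .inr x) (a₂ := .inl y) h) Sum.inr_ne_inl
  · exact absurd (hinj (a₁ := .inl x) (a₂ := .inr y) h) Sum.inl_ne_inr
  · exact Sum.inl_injective (hinj (a₁ := .inl x) (a₂ := .inl y) h)

lemma IsIntervalRepr.endpoint_le_right [Preorder α] (hrep : IsIntervalRepr l r) (q : α → Bool)
    (z : α) : endpoint l r q z ≤ r z := by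
  unfold endpoint; split_ifs
  exacts [le_rfl, hrep.left_le_right z]

lemma IsIntervalRepr.left_le_endpoint [Preorder α] (hrep : IsIntervalRepr l r) (q : α → Bool)
    (z : α) : l z ≤ endpoint l r q z := by
  unfold endpoint; split_ifs
  exacts [hrep.left_le_right z, le_rfl]

lemma IsIntervalRepr.strictMono_endpoint [Preorder α] (hrep : IsIntervalRepr l r)
    (q : α → Bool) : StrictMono (endpoint l r q) := fun x y hxy =>
  (hrep.endpoint_le_right q x).trans_lt <|
    ((hrep.lt_iff x y).1 hxy).trans_le (hrep.left_le_endpoint q y)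

theorem IsIntervalRepr.le_sum_endpoint_lt [Fintype α] [DecidableEq α] [Preorder α]
    (hrep : IsIntervalRepr l r) (hinj : Injective (Sum.elim l r)) {ε : ℝ} (hε0 : 0 ≤ ε)
    (hε : ∀ z, ε * (((l + r) z : ℝ) + 1) ^ 2 ≤ 1 / 4) {x y : α} (hxy : ¬ x ≤ y) :
    (1 + ε) / 4 ≤
      ∑ q with endpoint l r q y < endpoint l r q x, productWeight (biasedCoin ε (l + r)) q := by
  set f := biasedCoin ε (l + r)
  have hf0 := biasedCoin_nonneg hε0 hε
  have hf1 := biasedCoin_true_add_false ε (l + r)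
  have hs0 (z : α) : (0 : ℝ) ≤ (l + r) z := Nat.cast_nonneg _
  have hsmall (z : α) := mul_add_le_of_mul_add_one_sq_le hε0 (hs0 z) (hε z)
  have hne : x ≠ y := fun h => hxy h.le
  have hlyrx : l y < r x := lt_of_le_of_ne (not_lt.1 ((hrep.lt_iff x y).not.1 (mt le_of_lt hxy)))
    fun h => Sum.inl_ne_inr (hinj (a₁ := .inl y) (a₂ := .inr x) h)
  by_cases hl : l y < l x
  · calc (1 + ε) / 4 ≤ ∏ z ∈ {y}, f z false := by
          simp only [prod_singleton, f, biasedCoin, Bool.false_eq_true, ↓reduceIte]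
          linarith [hsmall y, mul_nonneg hε0 (hs0 y)]
      _ ≤ _ := prod_le_sum_productWeight hf0 hf1 _ _ fun q hq => by
          have hy : endpoint l r q y = l y := by simp_all [endpoint]
          exact hy ▸ hl.trans_le (hrep.left_le_endpoint q x)
  by_cases hr : r y < r x
  · calc (1 + ε) / 4 ≤ ∏ z ∈ {x}, f z true := by
          simp only [prod_singleton, f, biasedCoin, ↓reduceIte]
          linarith [hsmall x, mul_nonneg hε0 (hs0 x)]
      _ ≤ _ := prod_le_sum_productWeight hf0 hf1 _ _ fun q hq => by
          have hx : endpoint l r q x = r x := by simp_all [endpoint]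
          exact hx ▸ (hrep.endpoint_le_right q y).trans_lt hr
  -- both endpoints of `x` come first, so its midpoint is left of that of `y`
  have hl' : l x < l y := lt_of_le_of_ne (not_lt.1 hl)
    fun h => hne (Sum.inl_injective (hinj (a₁ := .inl x) (a₂ := .inl y) h))
  have hr' : r x < r y := lt_of_le_of_ne (not_lt.1 hr)
    fun h => hne (Sum.inr_injective (hinj (a₁ := .inr x) (a₂ := .inr y) h))
  have hmid : ((l + r) x : ℝ) + 1 ≤ (l + r) y := by
    simp only [Pi.add_apply]; exact_mod_cast (by omega : l x + r x + 1 ≤ l y + r y)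
  calc (1 + ε) / 4 ≤ ∏ z ∈ {x, y}, f z (decide (z = x)) := by
        rw [prod_pair hne]
        simp only [f, biasedCoin, decide_true, hne.symm, decide_false, Bool.false_eq_true,
          ↓reduceIte]
        exact one_add_div_four_le_mul hε0 (hs0 x) hmid (hε y)
    _ ≤ _ := prod_le_sum_productWeight hf0 hf1 _ _ fun q hq => by
        simp only [mem_insert, mem_singleton, forall_eq_or_imp, forall_eq, decide_true,
          hne.symm, decide_false] at hq
        simp [endpoint, hq, hlyrx]

end Endpoint

theorem IsIntervalRepr.fldim_le {α : Type*} [PartialOrder α] [DecidableEq α] [Fintype α]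
    {l r : α → ℕ} (hrep : IsIntervalRepr l r) (hinj : Injective (Sum.elim l r)) {ε : ℝ}
    (hε0 : 0 ≤ ε) (hε3 : ε ≤ 3) (hε : ∀ z, ε * (((l + r) z : ℝ) + 1) ^ 2 ≤ 1 / 4) :
    fldim α ≤ 4 / (1 + ε) := by
  set w := productWeight (biasedCoin ε (l + r))
  have hw : ∑ q, w q = 1 := sum_productWeight (biasedCoin_true_add_false ε _)
  have ht : 0 < 4 / (1 + ε) := by positivity
  have key := fldim_le_of_linearExtensions (fun q => sortedBy (endpoint l r q))
    (fun q => isPLE_sortedBy (endpoint_injective hinj q) (hrep.strictMono_endpoint q))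
    (fun q => mem_sortedBy _) (fun q => 4 / (1 + ε) * w q)
    (fun q => mul_nonneg ht.le (productWeight_nonneg (biasedCoin_nonneg hε0 hε) q))
    (by rw [← mul_sum, hw, mul_one, le_div_iff₀ (by positivity)]; linarith)
    (fun u v huv _ => by
      simp only [pleLT_sortedBy_iff (endpoint_injective hinj _), ← mul_sum]
      calc (1 : ℝ) = 4 / (1 + ε) * ((1 + ε) / 4) := by field_simp
        _ ≤ _ := by gcongr; exact hrep.le_sum_endpoint_lt hinj hε0 hε huv)
  simpa [← mul_sum, hw] using key

/-- If P is a finite interval order (no induced copy of the standard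
example S₂, i.e. no 2+2), then fldim(P) < 4. -/
theorem fldim_interval_order_lt_four (α : Type*) [PartialOrder α] [DecidableEq α] [Fintype α]
    (hio : ¬ ∃ a₁ a₂ b₁ b₂ : α,
      a₁ < b₂ ∧ a₂ < b₁ ∧
      ¬ a₁ ≤ b₁ ∧ ¬ b₁ ≤ a₁ ∧
      ¬ a₂ ≤ b₂ ∧ ¬ b₂ ≤ a₂ ∧
      ¬ a₁ ≤ a₂ ∧ ¬ a₂ ≤ a₁ ∧
      ¬ b₁ ≤ b₂ ∧ ¬ b₂ ≤ b₁) :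
    fldim α < 4 := by
  obtain ⟨l₀, r₀, hrep₀⟩ := IsIntervalOrder.exists_isIntervalRepr hio
  obtain ⟨l, r, hrep, hinj⟩ := hrep₀.exists_injective
  set H : ℕ := univ.sup (l + r)
  set ε : ℝ := 1 / (4 * ((H : ℝ) + 1) ^ 2)
  have hε0 : 0 < ε := by positivity
  have hε1 : ε ≤ 1 := div_le_one_of_le₀ (by nlinarith [H.cast_nonneg (α := ℝ)]) (by positivity)
  have hε (z : α) : ε * (((l + r) z : ℝ) + 1) ^ 2 ≤ 1 / 4 := by
    have : ((l + r) z : ℝ) ≤ H := by exact_mod_cast le_sup (f := l + r) (mem_univ z)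
    calc ε * (((l + r) z : ℝ) + 1) ^ 2 ≤ ε * ((H : ℝ) + 1) ^ 2 := by gcongr
      _ = 1 / 4 := by simp only [ε]; field_simp
  calc fldim α ≤ 4 / (1 + ε) := hrep.fldim_le hinj hε0.le (by linarith) hε
    _ < 4 := by rw [div_lt_iff₀ (by positivity)]; linarith
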